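/- arXiv:0712.3687 — 3 statements merged into one kernel-verified Lean document; each statement's English description precedes it below -/
import Mathlib

section
/- The emptied unit cube X = [0,1]³ \ ((0,1)² × [0,1)) ⊆ ℝ³ is homeomorphic to the closed unit disk {z ∈ ℝ² : |z| ≤ 1}. -/
/-- The closed unit cube `[0,1]³` in `ℝ³`. -/
def unitCube : Set (EuclideanSpace ℝ (Fin 3)) :=
  {p | ∀ i, p i ∈ Set.Icc (0 : ℝ) 1}

/-- The half-open column `(0,1)² × [0,1)`. -/
def removedColumn : Set (EuclideanSpace ℝ (Fin 3)) :=
  {p | p 0 ∈ Set.Ioo (0 : ℝ) 1 ∧ p 1 ∈ Set.Ioo (0 : ℝ) 1 ∧ p 2 ∈ Set.Ico (0 : ℝ) 1}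

/-- The emptied unit cube with bottom removed: `[0,1]³ \ ((0,1)² × [0,1))`. -/
def emptiedCube : Set (EuclideanSpace ℝ (Fin 3)) := unitCube \ removedColumn

/-!
The map `p ↦ (2 - z) • (x - 1/2, y - 1/2)` flattens `X` onto the square `[-1, 1]²`, the unit ball
of the sup norm: the top face (`z = 1`) goes to the inner square of radius `1/2`, and the walls,
linearly in the height, onto the frame `1/2 ≤ ‖·‖∞ ≤ 1`, the bottom edges going to its boundary.
The sup norm of an image point determines the height of its preimage, which gives a continuous
inverse. Finally the closed unit balls of two isomorphic normed spaces are homeomorphic, since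
both are bounded closed convex bodies; so the square is homeomorphic to the round disk.
-/

open Set Metric

theorem ContinuousLinearEquiv.nonempty_homeomorph_closedBall
    {E F : Type*} [NormedAddCommGroup E] [NormedSpace ℝ E]
    [NormedAddCommGroup F] [NormedSpace ℝ F] (e : E ≃L[ℝ] F) :
    Nonempty (closedBall (0 : E) 1 ≃ₜ closedBall (0 : F) 1) := by
  set K : Set E := e ⁻¹' closedBall 0 1
  have hK_convex : Convex ℝ K := (convex_closedBall (0 : F) 1).linear_preimage (e : E →ₗ[ℝ] F)
  have hK_interior : (interior K).Nonempty :=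
    ⟨0, interior_maximal (preimage_mono ball_subset_closedBall)
      (isOpen_ball.preimage e.continuous) (by simp)⟩
  have hK_bounded : Bornology.IsBounded K := e.antilipschitz.isBounded_preimage isBounded_closedBall
  obtain ⟨h, -, hK, -⟩ :=
    exists_homeomorph_image_interior_closure_frontier_eq_unitBall hK_convex hK_interior hK_bounded
  rw [(isClosed_closedBall.preimage e.continuous).closure_eq] at hK
  exact ⟨((h.image K).trans (Homeomorph.setCongr hK)).symm.trans
    ((e.toHomeomorph.image K).trans (Homeomorph.setCongr (e.image_preimage _)))⟩

namespace EmptiedCube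

noncomputable section

def offset (p : EuclideanSpace ℝ (Fin 3)) : Fin 2 → ℝ := ![p 0 - 1 / 2, p 1 - 1 / 2]

theorem norm_offset_le_iff (p : EuclideanSpace ℝ (Fin 3)) :
    ‖offset p‖ ≤ 1 / 2 ↔ p 0 ∈ Icc 0 1 ∧ p 1 ∈ Icc 0 1 := by
  simp only [pi_norm_le_iff_of_nonneg (by norm_num : (0 : ℝ) ≤ 1 / 2), Fin.forall_fin_two,
    offset, Matrix.cons_val_zero, Matrix.cons_val_one, Real.norm_eq_abs, abs_le, mem_Icc]
  constructor <;> rintro ⟨⟨_, _⟩, _, _⟩ <;> refine ⟨⟨?_, ?_⟩, ?_, ?_⟩ <;> linarith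

theorem norm_offset_lt_iff (p : EuclideanSpace ℝ (Fin 3)) :
    ‖offset p‖ < 1 / 2 ↔ p 0 ∈ Ioo 0 1 ∧ p 1 ∈ Ioo 0 1 := by
  simp only [pi_norm_lt_iff (by norm_num : (0 : ℝ) < 1 / 2), Fin.forall_fin_two,
    offset, Matrix.cons_val_zero, Matrix.cons_val_one, Real.norm_eq_abs, abs_lt, mem_Ioo]
  constructor <;> rintro ⟨⟨_, _⟩, _, _⟩ <;> refine ⟨⟨?_, ?_⟩, ?_, ?_⟩ <;> linarith

theorem mem_unitCube_iff (p : EuclideanSpace ℝ (Fin 3)) :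
    p ∈ unitCube ↔ ‖offset p‖ ≤ 1 / 2 ∧ p 2 ∈ Icc 0 1 := by
  rw [norm_offset_le_iff, and_assoc]
  exact Fin.forall_fin_succ.trans (and_congr_right' Fin.forall_fin_two)

theorem mem_emptiedCube_iff (p : EuclideanSpace ℝ (Fin 3)) :
    p ∈ emptiedCube ↔ ‖offset p‖ ≤ 1 / 2 ∧ p 2 ∈ Icc 0 1 ∧ (p 2 < 1 → ‖offset p‖ = 1 / 2) := by
  have hcol : p ∈ removedColumn ↔ ‖offset p‖ < 1 / 2 ∧ p 2 ∈ Ico 0 1 := by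
    rw [norm_offset_lt_iff, and_assoc]; rfl
  rw [emptiedCube, mem_sdiff, mem_unitCube_iff, hcol, and_assoc]
  refine and_congr_right fun hle => and_congr_right fun hz => ?_
  constructor
  · intro h hz1
    by_contra hne
    exact h ⟨lt_of_le_of_ne hle hne, hz.1, hz1⟩
  · rintro h ⟨hlt, -, hz1⟩
    exact hlt.ne (h hz1)

theorem ext_offset {p q : EuclideanSpace ℝ (Fin 3)} (h : offset p = offset q) (h2 : p 2 = q 2) :
    p = q := by
  have h0 := congrFun h 0
  have h1 := congrFun h 1
  simp only [offset, Matrix.cons_val_zero, Matrix.cons_val_one, sub_left_inj] at h0 h1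
  ext i
  fin_cases i <;> assumption

def unfold (p : EuclideanSpace ℝ (Fin 3)) : Fin 2 → ℝ := (2 - p 2) • offset p

theorem norm_unfold {p : EuclideanSpace ℝ (Fin 3)} (hp : p 2 ≤ 2) :
    ‖unfold p‖ = (2 - p 2) * ‖offset p‖ := by
  rw [unfold, norm_smul, Real.norm_of_nonneg (by linarith)]

-- `2 - foldScale q` is the height of the preimage of `q`.
def foldScale (q : Fin 2 → ℝ) : ℝ := max 1 (2 * ‖q‖)

def fold (q : Fin 2 → ℝ) : EuclideanSpace ℝ (Fin 3) :=
  WithLp.toLp 2 ![q 0 / foldScale q + 1 / 2, q 1 / foldScale q + 1 / 2, 2 - foldScale q]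

theorem one_le_foldScale (q : Fin 2 → ℝ) : 1 ≤ foldScale q := le_max_left _ _

theorem foldScale_pos (q : Fin 2 → ℝ) : 0 < foldScale q := one_pos.trans_le (one_le_foldScale q)

theorem offset_fold (q : Fin 2 → ℝ) : offset (fold q) = (foldScale q)⁻¹ • q := by
  ext i
  fin_cases i <;> simp [offset, fold, div_eq_inv_mul]

theorem fold_apply_two (q : Fin 2 → ℝ) : fold q 2 = 2 - foldScale q := rfl

theorem unfold_fold (q : Fin 2 → ℝ) : unfold (fold q) = q := by
  rw [unfold, offset_fold, fold_apply_two, sub_sub_cancel, smul_inv_smul₀ (foldScale_pos q).ne']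

theorem foldScale_unfold {p : EuclideanSpace ℝ (Fin 3)} (hp : p ∈ emptiedCube) :
    foldScale (unfold p) = 2 - p 2 := by
  obtain ⟨hle, ⟨-, hz1⟩, hwall⟩ := (mem_emptiedCube_iff p).1 hp
  rw [foldScale, norm_unfold (by linarith)]
  rcases hz1.lt_or_eq with hz1 | hz1
  · rw [hwall hz1, max_eq_right (by linarith)]; ring
  · rw [hz1, max_eq_left (by linarith)]; ring

theorem fold_unfold {p : EuclideanSpace ℝ (Fin 3)} (hp : p ∈ emptiedCube) :
    fold (unfold p) = p := by
  have hz : p 2 ≤ 1 := (((mem_emptiedCube_iff p).1 hp).2.1).2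
  refine ext_offset ?_ ?_
  · rw [offset_fold, foldScale_unfold hp, unfold, inv_smul_smul₀ (by linarith)]
  · rw [fold_apply_two, foldScale_unfold hp, sub_sub_cancel]

theorem mapsTo_unfold : MapsTo unfold emptiedCube (closedBall 0 1) := by
  intro p hp
  obtain ⟨hle, ⟨hz0, hz1⟩, -⟩ := (mem_emptiedCube_iff p).1 hp
  rw [mem_closedBall_zero_iff, norm_unfold (by linarith)]
  nlinarith [norm_nonneg (offset p)]

theorem mapsTo_fold : MapsTo fold (closedBall 0 1) emptiedCube := by
  intro q hq
  rw [mem_closedBall_zero_iff] at hq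
  have hs := one_le_foldScale q
  have hs' : 2 * ‖q‖ ≤ foldScale q := le_max_right _ _
  have hs2 : foldScale q ≤ 2 := max_le one_le_two (by linarith)
  have hnorm : ‖offset (fold q)‖ = ‖q‖ / foldScale q := by
    rw [offset_fold, norm_smul, norm_inv, Real.norm_of_nonneg (by linarith), inv_mul_eq_div]
  rw [mem_emptiedCube_iff, hnorm, fold_apply_two, div_le_iff₀ (by linarith)]
  refine ⟨by linarith, ⟨by linarith, by linarith⟩, fun hlt => ?_⟩
  have hscale : foldScale q = 2 * ‖q‖ := (max_choice _ _).resolve_left fun h => by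
    rw [← foldScale] at h; linarith
  rw [hscale]
  field_simp [show ‖q‖ ≠ 0 by linarith]

theorem continuous_unfold : Continuous unfold := by
  change Continuous fun p : EuclideanSpace ℝ (Fin 3) => (2 - p 2) • ![p 0 - 1 / 2, p 1 - 1 / 2]
  fun_prop

theorem continuous_fold : Continuous fold := by
  have : Continuous foldScale := by unfold foldScale; fun_prop
  unfold fold
  fun_prop (disch := exact fun q => (foldScale_pos q).ne')

def homeomorphSupBall : emptiedCube ≃ₜ closedBall (0 : Fin 2 → ℝ) 1 :=
  PartialHomeomorph.toHomeomorphSourceTarget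
    { toFun := unfold
      invFun := fold
      source := emptiedCube
      target := closedBall 0 1
      map_source' := mapsTo_unfold
      map_target' := mapsTo_fold
      left_inv' := fun _ => fold_unfold
      right_inv' := fun q _ => unfold_fold q
      continuousOn_toFun := continuous_unfold.continuousOn
      continuousOn_invFun := continuous_fold.continuousOn }

end

end EmptiedCube

/-- The emptied unit cube is homeomorphic to the closed unit disk in the plane. -/
theorem emptiedCube_homeomorphic_closedDisk :
    Nonempty (emptiedCube ≃ₜ (Metric.closedBall (0 : EuclideanSpace ℝ (Fin 2)) 1)) :=
  let ⟨e⟩ := (EuclideanSpace.equiv (Fin 2) ℝ).symm.nonempty_homeomorph_closedBall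
  ⟨EmptiedCube.homeomorphSupBall.trans e⟩
end

section
/- Let X = [0,1]³ \ ((0,1)² × [0,1)) carry its intrinsic metric d, and let ∂X = ([0,1]² \ (0,1)²) × {0} be its bottom rim. For any two points a,b ∈ ∂X, the intrinsic distance d(a,b) in X equals the intrinsic distance between a and b inside the rim ∂X itself, i.e. the shorter of the two arc lengths from a to b around the boundary square of the unit square. -/
open Set ENNReal

/-- The bottom rim `([0,1]² \ (0,1)²) × {0}` of the emptied cube. -/
def bottomRim : Set (EuclideanSpace ℝ (Fin 3)) :=
  {p | (p 0 ∈ Set.Icc (0 : ℝ) 1 ∧ p 1 ∈ Set.Icc (0 : ℝ) 1) ∧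
    ¬(p 0 ∈ Set.Ioo (0 : ℝ) 1 ∧ p 1 ∈ Set.Ioo (0 : ℝ) 1) ∧ p 2 = 0}

/-- The intrinsic (pseudo)distance of a subset `X ⊆ ℝ³`: the infimum of the Euclidean
lengths of continuous paths in `X` joining `x` to `y` (`∞` if there is none). -/
noncomputable def intrinsicDist (X : Set (EuclideanSpace ℝ (Fin 3)))
    (x y : EuclideanSpace ℝ (Fin 3)) : ℝ≥0∞ :=
  ⨅ (γ : ℝ → EuclideanSpace ℝ (Fin 3)) (_ : ContinuousOn γ (Icc 0 1))
    (_ : MapsTo γ (Icc 0 1) X) (_ : γ 0 = x) (_ : γ 1 = y),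
    eVariationOn γ (Icc 0 1)

/-!
A path in the emptied cube between two rim points either stays below the top face or reaches
height 1. In the first case each of its points lies on a wall below the lid, hence over the rim, so
dropping the height coordinate (a 1-Lipschitz map) turns it into a path in the rim that is no
longer. In the second case it climbs up and comes back down, so its length is at least 2, while any
two rim points are joined within the rim by an arc of length at most 2, half the perimeter.
-/

open NNReal

local notation "ℝ³" => EuclideanSpace ℝ (Fin 3)

lemma LipschitzOnWith.eVariationOn_Icc_le {E : Type*} [PseudoEMetricSpace E] {f : ℝ → E}
    {C : ℝ≥0} {a b : ℝ} (hf : LipschitzOnWith C f (Icc a b)) (hab : a ≤ b) :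
    eVariationOn f (Icc a b) ≤ C * ENNReal.ofReal (b - a) := by
  have hid := monotoneOn_id.eVariationOn_eq (left_mem_Icc.2 hab) (right_mem_Icc.2 hab)
  rw [inter_self] at hid
  simpa [hid] using hf.comp_eVariationOn_le (mapsTo_id (Icc a b))

lemma edist_add_edist_le_eVariationOn {E : Type*} [PseudoEMetricSpace E] (f : ℝ → E)
    {a b u : ℝ} (hu : u ∈ Icc a b) :
    edist (f a) (f u) + edist (f u) (f b) ≤ eVariationOn f (Icc a b) := by
  have hsplit := eVariationOn.Icc_add_Icc f hu.1 hu.2 (mem_univ u)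
  simp only [univ_inter] at hsplit
  exact hsplit ▸ add_le_add (eVariationOn.edist_le f (left_mem_Icc.2 hu.1) (right_mem_Icc.2 hu.1))
      (eVariationOn.edist_le f (left_mem_Icc.2 hu.2) (right_mem_Icc.2 hu.2))

lemma intrinsicDist_le_eVariationOn {X : Set ℝ³} {γ : ℝ → ℝ³}
    (hc : ContinuousOn γ (Icc 0 1)) (hX : MapsTo γ (Icc 0 1) X) :
    intrinsicDist X (γ 0) (γ 1) ≤ eVariationOn γ (Icc 0 1) :=
  iInf₂_le_of_le γ hc <| iInf₂_le_of_le hX rfl <| iInf_le_of_le rfl le_rfl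

lemma intrinsicDist_anti {X Y : Set ℝ³} (h : X ⊆ Y) (x y : ℝ³) :
    intrinsicDist Y x y ≤ intrinsicDist X x y :=
  iInf_mono fun _ => iInf_mono fun _ => iInf_mono' fun hX => ⟨hX.mono_right h, le_rfl⟩

lemma intrinsicDist_le_of_lipschitzOnWith {X : Set ℝ³} {f : ℝ → ℝ³} {K : ℝ≥0} {s t : ℝ}
    (hf : LipschitzOnWith K f (uIcc s t)) (hX : MapsTo f (uIcc s t) X) :
    intrinsicDist X (f s) (f t) ≤ K * edist s t := by
  have hℓ : MapsTo (AffineMap.lineMap s t : ℝ → ℝ) (Icc 0 1) (uIcc s t) := by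
    rw [← segment_eq_uIcc, segment_eq_image_lineMap]
    exact mapsTo_image _ _
  have hγ := hf.comp (lipschitzWith_lineMap s t).lipschitzOnWith hℓ
  have := (intrinsicDist_le_eVariationOn hγ.continuousOn (hX.comp hℓ)).trans
    (hγ.eVariationOn_Icc_le zero_le_one)
  simp only [Function.comp_apply, AffineMap.lineMap_apply_zero, AffineMap.lineMap_apply_one,
    sub_zero, ENNReal.ofReal_one, mul_one, ENNReal.coe_mul] at this
  rwa [edist_nndist]

lemma EuclideanSpace.dist_le_sum_dist {ι : Type*} [Fintype ι] (p q : EuclideanSpace ℝ ι) :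
    dist p q ≤ ∑ i, dist (p i) (q i) := by
  rw [EuclideanSpace.dist_eq]
  exact Real.sqrt_le_iff.2 ⟨Finset.sum_nonneg fun _ _ => dist_nonneg,
    Finset.sum_sq_le_sq_sum_of_nonneg fun _ _ => dist_nonneg⟩

noncomputable def ramp (t : ℝ) : ℝ := max 0 (min 1 t)

lemma monotone_ramp : Monotone ramp := fun _ _ h => max_le_max le_rfl (min_le_min le_rfl h)

lemma ramp_of_nonpos {t : ℝ} (h : t ≤ 0) : ramp t = 0 := by
  simp [ramp, min_eq_right (h.trans zero_le_one), h]

lemma ramp_of_one_le {t : ℝ} (h : 1 ≤ t) : ramp t = 1 := by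
  simp [ramp, h]

lemma ramp_of_mem_Icc {t : ℝ} (h₀ : 0 ≤ t) (h₁ : t ≤ 1) : ramp t = t := by
  simp [ramp, h₀, h₁]

lemma sum_range_ramp_sub (n : ℕ) (t : ℝ) :
    ∑ k ∈ Finset.range n, ramp (t - k) = max 0 (min (n : ℝ) t) := by
  induction n with
  | zero => simp
  | succ n ih =>
    rw [Finset.sum_range_succ, ih, Nat.cast_succ]
    have hn : (0 : ℝ) ≤ n := n.cast_nonneg
    simp only [ramp, max_def, min_def]
    split_ifs <;> linarith

/-- Runs twice around the rim at unit speed as `t` goes from `0` to `8`. Each coordinate is a signed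
sum of the ramps `ramp (t - k)`, `k < 8`, each ramp used once, so the `ℓ¹`-speed is bounded by that
of `∑ k < 8, ramp (t - k)`, which is the clamp of `t` to `[0, 8]` (`sum_range_ramp_sub`). -/
noncomputable def rimLoop (t : ℝ) : ℝ³ :=
  !₂[ramp t - ramp (t - 2) + ramp (t - 4) - ramp (t - 6),
    ramp (t - 1) - ramp (t - 3) + ramp (t - 5) - ramp (t - 7), 0]

lemma lipschitzWith_rimLoop : LipschitzWith 1 rimLoop := by
  refine LipschitzWith.of_dist_le_mul fun t t' => ?_
  wlog htt' : t ≤ t' generalizing t t'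
  · rw [dist_comm, dist_comm t]
    exact this t' t (le_of_not_ge htt')
  have hmono : ∀ k : ℝ, ramp (t - k) ≤ ramp (t' - k) := fun k => monotone_ramp (by linarith)
  have htotal : ∑ k ∈ Finset.range 8, (ramp (t' - k) - ramp (t - k)) ≤ t' - t := by
    rw [Finset.sum_sub_distrib, sum_range_ramp_sub, sum_range_ramp_sub]
    simp only [max_def, min_def]
    split_ifs <;> linarith
  norm_num [Finset.sum_range_succ] at htotal
  refine (EuclideanSpace.dist_le_sum_dist _ _).trans ?_
  simp only [rimLoop, Real.dist_eq, Fin.sum_univ_three, Matrix.cons_val_zero, Matrix.cons_val_one,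
    Matrix.cons_val, sub_self, abs_zero, add_zero, NNReal.coe_one, one_mul]
  rw [abs_sub_comm t, abs_of_nonneg (sub_nonneg.2 htt')]
  grind [monotone_ramp htt', hmono 1, hmono 2, hmono 3, hmono 4, hmono 5, hmono 6, hmono 7]

lemma rimLoop_bottom {u : ℝ} (h₀ : 0 ≤ u) (h₁ : u ≤ 1) : rimLoop u = !₂[u, 0, 0] := by
  ext i; fin_cases i <;> simp (disch := grind) [rimLoop, ramp_of_nonpos, ramp_of_mem_Icc]

lemma rimLoop_right {u : ℝ} (h₀ : 0 ≤ u) (h₁ : u ≤ 1) : rimLoop (u + 1) = !₂[1, u, 0] := by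
  ext i; fin_cases i <;>
    simp (disch := grind) [rimLoop, ramp_of_nonpos, ramp_of_one_le, ramp_of_mem_Icc]

lemma rimLoop_top {u : ℝ} (h₀ : 0 ≤ u) (h₁ : u ≤ 1) : rimLoop (u + 2) = !₂[1 - u, 1, 0] := by
  ext i; fin_cases i <;>
    simp (disch := grind) [rimLoop, ramp_of_nonpos, ramp_of_one_le, ramp_of_mem_Icc]

lemma rimLoop_left {u : ℝ} (h₀ : 0 ≤ u) (h₁ : u ≤ 1) : rimLoop (u + 3) = !₂[0, 1 - u, 0] := by
  ext i; fin_cases i <;>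
    simp (disch := grind) [rimLoop, ramp_of_nonpos, ramp_of_one_le, ramp_of_mem_Icc]

lemma rimLoop_add_four {t : ℝ} (h₀ : 0 ≤ t) (h₄ : t ≤ 4) : rimLoop (t + 4) = rimLoop t := by
  ext i; fin_cases i <;> simp (disch := grind) [rimLoop, ramp_of_nonpos, ramp_of_one_le] <;> ring_nf

lemma toLp_mem_bottomRim {x y : ℝ} (hx : x ∈ Icc 0 1) (hy : y ∈ Icc 0 1)
    (hside : x ∉ Ioo 0 1 ∨ y ∉ Ioo 0 1) : !₂[x, y, 0] ∈ bottomRim :=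
  ⟨⟨hx, hy⟩, fun h => hside.elim (· h.1) (· h.2), rfl⟩

lemma rimLoop_mem_bottomRim {t : ℝ} (h₀ : 0 ≤ t) (h₄ : t ≤ 4) : rimLoop t ∈ bottomRim := by
  rcases le_total t 1 with h₁ | h₁
  · rw [rimLoop_bottom h₀ h₁]
    exact toLp_mem_bottomRim ⟨h₀, h₁⟩ ⟨le_rfl, zero_le_one⟩ (.inr (by simp))
  rcases le_total t 2 with h₂ | h₂
  · rw [← sub_add_cancel t 1, rimLoop_right (by linarith) (by linarith)]
    exact toLp_mem_bottomRim ⟨zero_le_one, le_rfl⟩ ⟨by linarith, by linarith⟩ (.inl (by simp))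
  rcases le_total t 3 with h₃ | h₃
  · rw [← sub_add_cancel t 2, rimLoop_top (by linarith) (by linarith)]
    exact toLp_mem_bottomRim ⟨by linarith, by linarith⟩ ⟨zero_le_one, le_rfl⟩ (.inr (by simp))
  · rw [← sub_add_cancel t 3, rimLoop_left (by linarith) (by linarith)]
    exact toLp_mem_bottomRim ⟨le_rfl, zero_le_one⟩ ⟨by linarith, by linarith⟩ (.inl (by simp))

lemma mapsTo_rimLoop : MapsTo rimLoop (Icc 0 8) bottomRim := by
  rintro t ⟨h₀, h₈⟩
  rcases le_total t 4 with h₄ | h₄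
  · exact rimLoop_mem_bottomRim h₀ h₄
  · rw [← sub_add_cancel t 4, rimLoop_add_four (by linarith) (by linarith)]
    exact rimLoop_mem_bottomRim (by linarith) (by linarith)

lemma exists_rimLoop_eq {p : ℝ³} (hp : p ∈ bottomRim) : ∃ s ∈ Icc (0 : ℝ) 4, rimLoop s = p := by
  obtain ⟨⟨⟨hx₀, hx₁⟩, hy₀, hy₁⟩, hint, hz⟩ := hp
  have hside : p 1 = 0 ∨ p 0 = 1 ∨ p 1 = 1 ∨ p 0 = 0 := by
    simp only [mem_Ioo, not_and_or, not_lt] at hint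
    grind
  rcases hside with h | h | h | h
  · refine ⟨p 0, ⟨hx₀, by linarith⟩, ?_⟩
    rw [rimLoop_bottom hx₀ hx₁]
    ext i; fin_cases i <;> simp [h, hz]
  · refine ⟨p 1 + 1, ⟨by linarith, by linarith⟩, ?_⟩
    rw [rimLoop_right hy₀ hy₁]
    ext i; fin_cases i <;> simp [h, hz]
  · refine ⟨1 - p 0 + 2, ⟨by linarith, by linarith⟩, ?_⟩
    rw [rimLoop_top (by linarith) (by linarith)]
    ext i; fin_cases i <;> simp [h, hz]
  · refine ⟨1 - p 1 + 3, ⟨by linarith, by linarith⟩, ?_⟩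
    rw [rimLoop_left (by linarith) (by linarith)]
    ext i; fin_cases i <;> simp [h, hz]

lemma intrinsicDist_bottomRim_le_two {a b : ℝ³} (ha : a ∈ bottomRim) (hb : b ∈ bottomRim) :
    intrinsicDist bottomRim a b ≤ 2 := by
  obtain ⟨s, hs, rfl⟩ := exists_rimLoop_eq ha
  obtain ⟨t, ht, rfl⟩ := exists_rimLoop_eq hb
  -- shifting one parameter by the period `4` turns the longer arc into the shorter one
  obtain ⟨s', hs', t', ht', hs's, ht't, hdist⟩ : ∃ s' ∈ Icc (0 : ℝ) 8, ∃ t' ∈ Icc (0 : ℝ) 8,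
      rimLoop s' = rimLoop s ∧ rimLoop t' = rimLoop t ∧ |s' - t'| ≤ 2 := by
    rcases le_total |s - t| 2 with h | h
    · exact ⟨s, ⟨hs.1, by linarith [hs.2]⟩, t, ⟨ht.1, by linarith [ht.2]⟩, rfl, rfl, h⟩
    rcases le_total s t with hst | hst
    · refine ⟨s + 4, ⟨by linarith [hs.1], by linarith [hs.2]⟩, t, ⟨ht.1, by linarith [ht.2]⟩,
        rimLoop_add_four hs.1 hs.2, rfl, ?_⟩
      rw [abs_of_nonpos (sub_nonpos.2 hst)] at h
      rw [abs_le]; constructor <;> linarith [ht.2, hs.1]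
    · refine ⟨s, ⟨hs.1, by linarith [hs.2]⟩, t + 4, ⟨by linarith [ht.1], by linarith [ht.2]⟩,
        rfl, rimLoop_add_four ht.1 ht.2, ?_⟩
      rw [abs_of_nonneg (by linarith)] at h
      rw [abs_le]; constructor <;> linarith [ht.1, hs.2]
  rw [← hs's, ← ht't]
  calc _ ≤ ((1 : ℝ≥0) : ℝ≥0∞) * edist s' t' :=
        intrinsicDist_le_of_lipschitzOnWith lipschitzWith_rimLoop.lipschitzOnWith
          (mapsTo_rimLoop.mono_left (uIcc_subset_Icc hs' ht'))
    _ ≤ 2 := by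
      rw [ENNReal.coe_one, one_mul, edist_dist, Real.dist_eq]
      exact (ENNReal.ofReal_le_ofReal hdist).trans_eq (ENNReal.ofReal_ofNat 2)

noncomputable def floorProj (p : ℝ³) : ℝ³ := !₂[p 0, p 1, 0]

lemma lipschitzWith_floorProj : LipschitzWith 1 floorProj := by
  refine LipschitzWith.of_dist_le_mul fun p q => ?_
  simp only [floorProj, EuclideanSpace.dist_eq, Fin.sum_univ_three, Matrix.cons_val_zero,
    Matrix.cons_val_one, Matrix.cons_val, dist_self, ne_eq, OfNat.ofNat_ne_zero, not_false_eq_true,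
    zero_pow, add_zero, NNReal.coe_one, one_mul]
  exact Real.sqrt_le_sqrt (le_add_of_nonneg_right (sq_nonneg _))

lemma floorProj_eq_self_of_mem_bottomRim {p : ℝ³} (hp : p ∈ bottomRim) : floorProj p = p := by
  ext i; fin_cases i <;> simp [floorProj, hp.2.2]

lemma floorProj_mem_bottomRim {p : ℝ³} (hp : p ∈ emptiedCube) (htop : p 2 ≠ 1) :
    floorProj p ∈ bottomRim := by
  obtain ⟨hcube, hcol⟩ := hp
  refine ⟨⟨hcube 0, hcube 1⟩, fun hint => hcol ⟨hint.1, hint.2, (hcube 2).1, ?_⟩, rfl⟩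
  exact lt_of_le_of_ne (hcube 2).2 htop

lemma bottomRim_subset_emptiedCube : bottomRim ⊆ emptiedCube := by
  rintro p ⟨⟨hx, hy⟩, hint, hz⟩
  refine ⟨fun i => ?_, fun hcol => hint ⟨hcol.1, hcol.2.1⟩⟩
  fin_cases i
  exacts [hx, hy, by simp [hz]]

lemma two_le_eVariationOn_of_climb {γ : ℝ → ℝ³} {u : ℝ} (hu : u ∈ Icc 0 1) (h₀ : γ 0 2 = 0)
    (h₁ : γ 1 2 = 0) (hγu : γ u 2 = 1) : 2 ≤ eVariationOn γ (Icc 0 1) := by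
  have hclimb : ∀ p q : ℝ³, p 2 = 0 → q 2 = 1 → 1 ≤ edist p q := fun p q hp hq => by
    simpa [hp, hq] using PiLp.edist_apply_le p q 2
  calc (2 : ℝ≥0∞) = 1 + 1 := one_add_one_eq_two.symm
    _ ≤ edist (γ 0) (γ u) + edist (γ u) (γ 1) :=
      add_le_add (hclimb _ _ h₀ hγu) (by rw [edist_comm]; exact hclimb _ _ h₁ hγu)
    _ ≤ eVariationOn γ (Icc 0 1) := edist_add_edist_le_eVariationOn γ hu

lemma intrinsicDist_bottomRim_le_eVariationOn_of_below_lid {γ : ℝ → ℝ³}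
    (hc : ContinuousOn γ (Icc 0 1)) (hX : MapsTo γ (Icc 0 1) emptiedCube)
    (hlid : ∀ u ∈ Icc (0 : ℝ) 1, γ u 2 ≠ 1) (h₀ : γ 0 ∈ bottomRim) (h₁ : γ 1 ∈ bottomRim) :
    intrinsicDist bottomRim (γ 0) (γ 1) ≤ eVariationOn γ (Icc 0 1) := by
  have hflat : MapsTo (floorProj ∘ γ) (Icc 0 1) bottomRim := fun u hu =>
    floorProj_mem_bottomRim (hX hu) (hlid u hu)
  calc intrinsicDist bottomRim (γ 0) (γ 1)
      = intrinsicDist bottomRim ((floorProj ∘ γ) 0) ((floorProj ∘ γ) 1) := by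
        simp only [Function.comp_apply, floorProj_eq_self_of_mem_bottomRim h₀,
          floorProj_eq_self_of_mem_bottomRim h₁]
    _ ≤ eVariationOn (floorProj ∘ γ) (Icc 0 1) :=
      intrinsicDist_le_eVariationOn (lipschitzWith_floorProj.continuous.comp_continuousOn hc) hflat
    _ ≤ eVariationOn γ (Icc 0 1) := by
      simpa using lipschitzWith_floorProj.lipschitzOnWith.comp_eVariationOn_le
        (mapsTo_univ γ (Icc 0 1))

/-- For points of the bottom rim, the intrinsic distance in the emptied cube equals the
intrinsic distance computed within the rim itself (the shorter arc around the square). -/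
theorem intrinsicDist_emptiedCube_eq_intrinsicDist_rim
    (a b : EuclideanSpace ℝ (Fin 3)) (ha : a ∈ bottomRim) (hb : b ∈ bottomRim) :
    intrinsicDist emptiedCube a b = intrinsicDist bottomRim a b := by
  refine le_antisymm (intrinsicDist_anti bottomRim_subset_emptiedCube a b) ?_
  refine le_iInf₂ fun γ hc => le_iInf₂ fun hX h₀ => le_iInf fun h₁ => ?_
  subst h₀ h₁
  by_cases hclimb : ∃ u ∈ Icc (0 : ℝ) 1, γ u 2 = 1
  · obtain ⟨u, hu, hγu⟩ := hclimb
    exact (intrinsicDist_bottomRim_le_two ha hb).trans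
      (two_le_eVariationOn_of_climb hu ha.2.2 hb.2.2 hγu)
  · push Not at hclimb
    exact intrinsicDist_bottomRim_le_eVariationOn_of_below_lid hc hX hclimb ha hb
end

section
/- Let (X,d) be an extended metric space (d takes values in [0,∞]), let ~ be an equivalence relation on X, and let A ⊆ X be a closed set containing every point of X whose equivalence class contains a point other than itself. Define the quotient chain pseudometric D(a,b) = inf { Σ_{i=0}^{k} d(x_i, y_i) : k ≥ 0, x_0 = a, y_k = b, and y_i ~ x_{i+1} for all 0 ≤ i < k }. Then for every a ∉ A and every b ∈ X, D(a,b) ≥ min( d(a,b), dist(a,A) ); in particular, if a ∉ A and b ≠ a then D(a,b) > 0. -/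
/-!
A function `f` that grows by at most `d(x, y)` along every metric step and does not increase
across a jump between `~`-equivalent points satisfies `f b ≤ f a + D(a, b)`, by induction along
any chain. The function `b ↦ min (d(a, b), dist(a, A))` is such a function: a jump can only
start at a point of `A`, where it already takes its maximal value `dist(a, A)`.
-/

open scoped ENNReal

/-- The quotient chain pseudometric associated to an extended metric and an equivalence
relation `r`: the infimum over all finite chains `x₀ = a, y₀, x₁, y₁, …, xₖ, yₖ = b` with
`yᵢ r xᵢ₊₁` of `∑ edist xᵢ yᵢ`. -/
noncomputable def chainDist {X : Type*} [EMetricSpace X] (r : X → X → Prop) (a b : X) :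
    ℝ≥0∞ :=
  ⨅ (k : ℕ) (x : Fin (k + 1) → X) (y : Fin (k + 1) → X) (_ : x 0 = a)
    (_ : y (Fin.last k) = b) (_ : ∀ i : Fin k, r (y i.castSucc) (x i.succ)),
    ∑ i, edist (x i) (y i)

open Metric

section

variable {X : Type*} [EMetricSpace X] {r : X → X → Prop} {f : X → ℝ≥0∞}

theorem le_add_sum_edist_of_chain (hf : ∀ x y, f y ≤ f x + edist x y)
    (hfr : ∀ x y, r x y → f y ≤ f x) :
    ∀ (k : ℕ) (x y : Fin (k + 1) → X), (∀ i : Fin k, r (y i.castSucc) (x i.succ)) →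
      f (y (Fin.last k)) ≤ f (x 0) + ∑ i, edist (x i) (y i)
  | 0, x, y, _ => by simpa using hf (x 0) (y 0)
  | k + 1, x, y, hlink => by
    have htail := le_add_sum_edist_of_chain hf hfr k (x ∘ Fin.succ) (y ∘ Fin.succ)
      fun i => hlink i.succ
    have hjump : f (x 1) ≤ f (y 0) := hfr _ _ (hlink 0)
    rw [Fin.sum_univ_succ, ← Fin.succ_last]
    calc f (y (Fin.last k).succ) ≤ f (x 1) + ∑ i : Fin (k + 1), edist (x i.succ) (y i.succ) :=
          htail
      _ ≤ f (x 0) + edist (x 0) (y 0) + ∑ i : Fin (k + 1), edist (x i.succ) (y i.succ) := by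
          gcongr; exact hjump.trans (hf _ _)
      _ = _ := add_assoc _ _ _

theorem le_add_chainDist (hf : ∀ x y, f y ≤ f x + edist x y) (hfr : ∀ x y, r x y → f y ≤ f x)
    (a b : X) : f b ≤ f a + chainDist r a b := by
  rw [← tsub_le_iff_left, chainDist]
  simp only [le_iInf_iff]
  rintro k x y rfl rfl hlink
  exact tsub_le_iff_left.2 (le_add_sum_edist_of_chain hf hfr k x y hlink)

end

theorem min_edist_infEDist_le_chainDist {X : Type*} [EMetricSpace X] {r : X → X → Prop}
    {A : Set X} (hAr : ∀ x y : X, r x y → y ≠ x → x ∈ A) (a b : X) :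
    min (edist a b) (infEDist a A) ≤ chainDist r a b := by
  have hf (x y : X) : min (edist a y) (infEDist a A) ≤ min (edist a x) (infEDist a A) + edist x y :=
    calc min (edist a y) (infEDist a A)
        ≤ min (edist a x + edist x y) (infEDist a A + edist x y) :=
          min_le_min (edist_triangle _ _ _) le_self_add
      _ = min (edist a x) (infEDist a A) + edist x y := min_add_add_right _ _ _
  have hfr (x y : X) (hxy : r x y) :
      min (edist a y) (infEDist a A) ≤ min (edist a x) (infEDist a A) := by
    rcases eq_or_ne y x with rfl | hne
    · rfl
    · rw [min_eq_right (infEDist_le_edist_of_mem (hAr x y hxy hne))]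
      exact min_le_right _ _
  simpa using le_add_chainDist hf hfr a b

theorem chainDist_ge_min_of_not_mem_closed_general
    {X : Type*} [EMetricSpace X] (r : X → X → Prop)
    (A : Set X) (hA : IsClosed A)
    (hAr : ∀ x y : X, r x y → y ≠ x → x ∈ A)
    (a b : X) (ha : a ∉ A) :
    min (edist a b) (EMetric.infEdist a A) ≤ chainDist r a b ∧
      (b ≠ a → 0 < chainDist r a b) := by
  have hmin := min_edist_infEDist_le_chainDist hAr a b
  refine ⟨hmin, fun hba => lt_of_lt_of_le (lt_min ?_ ?_) hmin⟩
  · exact edist_pos.2 hba.symm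
  · exact infEDist_pos_iff_notMem_closure.2 (hA.closure_eq.symm ▸ ha)

/-- Let `A` be a closed set containing every point whose `r`-equivalence class is not a
singleton. Then for `a ∉ A` and any `b`, the chain pseudometric `D(a,b)` is at least
`min (edist a b) (infEdist a A)`; in particular `D(a,b) > 0` whenever `b ≠ a`. -/
theorem chainDist_ge_min_of_not_mem_closed
    {X : Type*} [EMetricSpace X] (r : X → X → Prop) (hr : Equivalence r)
    (A : Set X) (hA : IsClosed A)
    (hAr : ∀ x y : X, r x y → y ≠ x → x ∈ A)
    (a b : X) (ha : a ∉ A) :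
    min (edist a b) (EMetric.infEdist a A) ≤ chainDist r a b ∧
      (b ≠ a → 0 < chainDist r a b) :=
  chainDist_ge_min_of_not_mem_closed_general r A hA hAr a b ha
end
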